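/- arXiv:1803.10415 — 5 statements merged into one kernel-verified Lean document; each statement's English description precedes it below -/
import Mathlib

section
/- For the single-arm allocation algorithm with parameter c > 1 (allocate M_t = L_{t-1} + c/t, set L_t = M_t on failure, L_t = L_{t-1} on success, L_0 = 0), define the error e_t = ν - L_t where 0 ≤ ν ≤ 1 is the arm's threshold. If the conditional probability of failure at time t is at least ν - M_t, then for all 0 ≤ t ≤ n, E[e_t] ≤ (c²/(c-1)) · 1/(t+1). -/
open MeasureTheory

/-!
With `e t = ν - L t` and `k = c / (t + 1)`, the update reads `L (t+1) = L t + k (1 - X (t+1))`.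
Taking expectations and using the failure bound `E[1 - X (t+1)] ≥ E[e t] - k` gives Chung's
recursion `E[e (t+1)] ≤ (1 - k) E[e t] + k²`, while `E[e t] ≤ ν ≤ 1` because `L ≥ 0`.
For `t + 1 < c` the claimed bound is at least `1`, hence trivial; once `k ≤ 1` the recursion
propagates it, since `C = c²/(c-1)` satisfies `(1 - k) C/T + k² ≤ C/(T+1)` for every `T > 0`.
-/

theorem chung_recursion_step {c T : ℝ} (hc : 1 < c) (hT : 0 < T) :
    (1 - c / T) * (c ^ 2 / (c - 1) / T) + (c / T) ^ 2 ≤ c ^ 2 / (c - 1) / (T + 1) := by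
  have hc1 : 0 < c - 1 := by linarith
  have slack :
      c ^ 2 / (c - 1) / (T + 1) - ((1 - c / T) * (c ^ 2 / (c - 1) / T) + (c / T) ^ 2)
        = c ^ 2 / ((c - 1) * T ^ 2 * (T + 1)) := by
    field_simp; ring
  have : 0 ≤ c ^ 2 / ((c - 1) * T ^ 2 * (T + 1)) := by positivity
  linarith

theorem one_le_chung_bound {c T : ℝ} (hc : 1 < c) (hT : 0 < T) (hTc : T ≤ c + 1) :
    1 ≤ c ^ 2 / (c - 1) / T := by
  have hc1 : 0 < c - 1 := by linarith
  rw [le_div_iff₀ hT, le_div_iff₀ hc1]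
  nlinarith

theorem chung_recursion_le {c : ℝ} (hc : 1 < c) {a : ℕ → ℝ} (ha : ∀ t, a t ≤ 1)
    (hrec : ∀ t : ℕ, c ≤ t + 1 → a (t + 1) ≤ (1 - c / (t + 1)) * a t + (c / (t + 1)) ^ 2)
    (t : ℕ) : a t ≤ c ^ 2 / (c - 1) * (1 / (t + 1)) := by
  rw [mul_one_div]
  induction t with
  | zero => exact (ha 0).trans (one_le_chung_bound hc (by simp) (by push_cast; linarith))
  | succ t ih =>
    push_cast
    by_cases hct : c ≤ t + 1
    · calc a (t + 1) ≤ (1 - c / (t + 1)) * a t + (c / (t + 1)) ^ 2 := hrec t hct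
        _ ≤ (1 - c / (t + 1)) * (c ^ 2 / (c - 1) / (t + 1)) + (c / (t + 1)) ^ 2 := by
          have : c / (t + 1) ≤ 1 := div_le_one_of_le₀ hct (by positivity)
          gcongr
        _ ≤ c ^ 2 / (c - 1) / (t + 1 + 1) := chung_recursion_step hc (by positivity)
    · exact (ha _).trans (one_le_chung_bound hc (by positivity) (by linarith))

theorem ite_eq_add_mul_one_sub {x l k : ℝ} (hx : x = 0 ∨ x = 1) :
    (if x = 0 then l + k else l) = l + k * (1 - x) := by
  rcases hx with rfl | rfl <;> simp

section

variable {Ω : Type*} {m₀ : MeasurableSpace Ω} {μ : Measure Ω}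

theorem integral_le_of_le_condExp {m : MeasurableSpace Ω} (hm : m ≤ m₀)
    [SigmaFinite (μ.trim hm)] {f g : Ω → ℝ} (hf : Integrable f μ) (hfg : f ≤ᵐ[μ] μ[g | m]) :
    ∫ ω, f ω ∂μ ≤ ∫ ω, g ω ∂μ :=
  calc ∫ ω, f ω ∂μ ≤ ∫ ω, (μ[g | m]) ω ∂μ := integral_mono_ae hf integrable_condExp hfg
    _ = ∫ ω, g ω ∂μ := integral_condExp hm

theorem integral_error_step_le [IsProbabilityMeasure μ] {m : MeasurableSpace Ω} (hm : m ≤ m₀)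
    {ν k : ℝ} (hk : 0 ≤ k) {l l' x : Ω → ℝ} (hl : Integrable l μ) (hx : Integrable x μ)
    (hstep : ∀ ω, l' ω = l ω + k * (1 - x ω))
    (hfail : ∀ᵐ ω ∂μ, ν - (l ω + k) ≤ (μ[fun ω => 1 - x ω | m]) ω) :
    ∫ ω, (ν - l' ω) ∂μ ≤ (1 - k) * ∫ ω, (ν - l ω) ∂μ + k ^ 2 := by
  have hel : Integrable (fun ω => ν - l ω) μ := (integrable_const ν).sub hl
  have hfx : Integrable (fun ω => 1 - x ω) μ := (integrable_const 1).sub hx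
  have hfail_mean : ∫ ω, (ν - l ω) ∂μ - k ≤ ∫ ω, (1 - x ω) ∂μ := by
    have := integral_le_of_le_condExp hm (f := fun ω => ν - (l ω + k))
      (by simp_rw [← sub_sub]; exact hel.sub (integrable_const k)) hfail
    simpa [sub_add_eq_sub_sub, integral_sub hel (integrable_const k)] using this
  have hmean : ∫ ω, (ν - l' ω) ∂μ = ∫ ω, (ν - l ω) ∂μ - k * ∫ ω, (1 - x ω) ∂μ := by
    simp_rw [hstep, show ∀ ω, ν - (l ω + k * (1 - x ω)) = (ν - l ω) - k * (1 - x ω) from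
      fun ω => by ring]
    rw [integral_sub hel (hfx.const_mul k), integral_const_mul]
  nlinarith [mul_le_mul_of_nonneg_left hfail_mean hk]

variable {c : ℝ} {X L : ℕ → Ω → ℝ}

theorem lowerBound_nonneg (hc : 0 ≤ c) (hX : ∀ t ω, X t ω ≤ 1) (hL0 : ∀ ω, L 0 ω = 0)
    (hstep : ∀ t ω, L (t + 1) ω = L t ω + c / (t + 1) * (1 - X (t + 1) ω)) (t : ℕ) (ω : Ω) :
    0 ≤ L t ω := by
  induction t with
  | zero => rw [hL0]
  | succ t ih =>
    have hinc : 0 ≤ c / (t + 1) * (1 - X (t + 1) ω) :=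
      mul_nonneg (by positivity) (sub_nonneg.2 (hX (t + 1) ω))
    rw [hstep]
    linarith

theorem integrable_lowerBound [IsFiniteMeasure μ] (hX : ∀ t, Integrable (X t) μ)
    (hL0 : ∀ ω, L 0 ω = 0)
    (hstep : ∀ t ω, L (t + 1) ω = L t ω + c / (t + 1) * (1 - X (t + 1) ω)) (t : ℕ) :
    Integrable (L t) μ := by
  induction t with
  | zero => simp [funext hL0]
  | succ t ih =>
    rw [funext (hstep t)]
    exact ih.add (((integrable_const 1).sub (hX (t + 1))).const_mul _)

end

theorem single_arm_error_bound_general {Ω : Type*} [MeasurableSpace Ω]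
    (μ : Measure Ω) [IsProbabilityMeasure μ]
    (c ν : ℝ) (hc : 1 < c) (hν1 : ν ≤ 1)
    (X L M : ℕ → Ω → ℝ)
    (hX01 : ∀ t ω, X t ω = 0 ∨ X t ω = 1)
    (hL0 : ∀ ω, L 0 ω = 0)
    (hM : ∀ t : ℕ, 1 ≤ t → ∀ ω, M t ω = L (t - 1) ω + c / t)
    (hLupd : ∀ t : ℕ, 1 ≤ t → ∀ ω,
      L t ω = if X t ω = 0 then M t ω else L (t - 1) ω)
    (ℱ : ℕ → MeasurableSpace Ω) (hℱ : ∀ t, ℱ t ≤ ‹MeasurableSpace Ω›)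
    (hXmeas : ∀ t, Measurable[ℱ t] (X t))
    (hfail : ∀ t : ℕ, 1 ≤ t →
      ∀ᵐ ω ∂μ, ν - M t ω ≤ (μ[fun ω' => 1 - X t ω' | ℱ (t - 1)]) ω)
    (n : ℕ) :
    ∀ t ≤ n, ∫ ω, (ν - L t ω) ∂μ ≤ c ^ 2 / (c - 1) * (1 / (t + 1)) := by
  have hM' (t : ℕ) (ω : Ω) : M (t + 1) ω = L t ω + c / (t + 1) := by
    simpa using hM (t + 1) le_add_self ω
  have hstep (t : ℕ) (ω : Ω) : L (t + 1) ω = L t ω + c / (t + 1) * (1 - X (t + 1) ω) := by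
    simpa [hM', ite_eq_add_mul_one_sub (hX01 (t + 1) ω)] using hLupd (t + 1) le_add_self ω
  have hX_le (t : ℕ) (ω : Ω) : X t ω ≤ 1 := by rcases hX01 t ω with h | h <;> simp [h]
  have hX_int (t : ℕ) : Integrable (X t) μ :=
    .of_bound ((hXmeas t).mono (hℱ t) le_rfl).aestronglyMeasurable 1
      (.of_forall fun ω => by rcases hX01 t ω with h | h <;> simp [h])
  have hL_int := integrable_lowerBound hX_int hL0 hstep
  have hmean_le_one (t : ℕ) : ∫ ω, (ν - L t ω) ∂μ ≤ 1 := by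
    have : 0 ≤ ∫ ω, L t ω ∂μ :=
      integral_nonneg (lowerBound_nonneg (by linarith) hX_le hL0 hstep t)
    rw [integral_sub (integrable_const ν) (hL_int t)]
    simp only [integral_const, probReal_univ, smul_eq_mul, one_mul]
    linarith
  intro t _
  refine chung_recursion_le hc hmean_le_one (fun t _ => ?_) t
  exact integral_error_step_le (hℱ t) (by positivity) (hL_int t) (hX_int (t + 1)) (hstep t)
    (by simpa [hM'] using hfail (t + 1) le_add_self)

/-- Single-arm allocation algorithm with parameter `c > 1`: allocate `M t = L (t-1) + c/t`,
set `L t = M t` on failure (`X t = 0`), `L t = L (t-1)` on success, `L 0 = 0`. If the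
conditional probability of failure at time `t` (given the history) is at least `ν - M t`,
then for all `0 ≤ t ≤ n`, `E[ν - L t] ≤ (c²/(c-1))·1/(t+1)`. -/
theorem single_arm_error_bound {Ω : Type*} [MeasurableSpace Ω]
    (μ : Measure Ω) [IsProbabilityMeasure μ]
    (c ν : ℝ) (hc : 1 < c) (hν0 : 0 ≤ ν) (hν1 : ν ≤ 1)
    (X L M : ℕ → Ω → ℝ)
    (hX01 : ∀ t ω, X t ω = 0 ∨ X t ω = 1)
    (hL0 : ∀ ω, L 0 ω = 0)
    (hM : ∀ t : ℕ, 1 ≤ t → ∀ ω, M t ω = L (t - 1) ω + c / t)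
    (hLupd : ∀ t : ℕ, 1 ≤ t → ∀ ω,
      L t ω = if X t ω = 0 then M t ω else L (t - 1) ω)
    (ℱ : ℕ → MeasurableSpace Ω) (hℱ : ∀ t, ℱ t ≤ ‹MeasurableSpace Ω›)
    (hℱmono : Monotone ℱ)
    (hXmeas : ∀ t, Measurable[ℱ t] (X t))
    (hfail : ∀ t : ℕ, 1 ≤ t →
      ∀ᵐ ω ∂μ, ν - M t ω ≤ (μ[fun ω' => 1 - X t ω' | ℱ (t - 1)]) ω)
    (n : ℕ) :
    ∀ t ≤ n, ∫ ω, (ν - L t ω) ∂μ ≤ c ^ 2 / (c - 1) * (1 / (t + 1)) :=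
  single_arm_error_bound_general μ c ν hc hν1 X L M hX01 hL0 hM hLupd ℱ hℱ hXmeas hfail n
end

section
/- Let a_1 = c·ν and a_t = c·ν·exp(-Σ_{i=1}^{t-1} a_i/(c·ν)) for t > 1, where c, ν > 0. Then Σ_{t=1}^n a_t ≤ c·ν·(log n + 1) for all n ≥ 1. -/
/-! With `K = c·ν` and `s_n = S_n / K`, the partial sums obey `s_0 = 0`, `s_{n+1} = g(s_n)` for
`g(x) = x + e^{-x}`, which is increasing on `[0, ∞)`. Hence `s_n ≤ log n + 1` propagates:
`g(log n + 1) = log n + 1 + 1/(e n) ≤ log (n + 1) + 1`, because `1/(e n) ≤ 1/(n + 1) ≤ log (1 + 1/n)`. -/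

open Real Finset

lemma add_exp_neg_le_add_exp_neg {x y : ℝ} (hx : 0 ≤ x) (hxy : x ≤ y) :
    x + exp (-x) ≤ y + exp (-y) := by
  have hexp_le_one : exp (-x) ≤ 1 := exp_le_one_iff.2 (by linarith)
  have hlower : exp (-x) * (1 - (y - x)) ≤ exp (-y) :=
    calc exp (-x) * (1 - (y - x)) ≤ exp (-x) * exp (-(y - x)) := by
          gcongr; linarith [add_one_le_exp (-(y - x))]
      _ = exp (-y) := by rw [← exp_add]; ring_nf
  nlinarith [mul_nonneg (sub_nonneg.2 hexp_le_one) (sub_nonneg.2 hxy)]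

lemma log_add_one_add_exp_neg_le {x : ℝ} (hx : 1 ≤ x) :
    log x + 1 + exp (-(log x + 1)) ≤ log (x + 1) + 1 := by
  have hx₀ : 0 < x := by linarith
  have hexp : exp (-(log x + 1)) ≤ (x + 1)⁻¹ := by
    rw [exp_neg, exp_add, exp_log hx₀]
    gcongr
    nlinarith [exp_one_gt_two]
  have hlog : (x + 1)⁻¹ ≤ log (x + 1) - log x := by
    have h := one_sub_inv_le_log_of_pos (show 0 < (x + 1) / x by positivity)
    rwa [log_div (by positivity) hx₀.ne', inv_div, one_sub_div (by positivity), add_sub_cancel_left,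
      one_div] at h
  linarith

theorem le_log_add_one_of_add_exp_neg {s : ℕ → ℝ} (h0 : s 0 = 0)
    (hsucc : ∀ n, s (n + 1) = s n + exp (-s n)) {n : ℕ} (hn : 1 ≤ n) :
    s n ≤ log n + 1 := by
  have hnonneg : ∀ n, 0 ≤ s n := by
    intro n
    induction n with
    | zero => exact h0.ge
    | succ n ih => rw [hsucc]; positivity
  induction n, hn using Nat.le_induction with
  | base => simp [hsucc, h0]
  | succ n hn ih =>
    calc s (n + 1) = s n + exp (-s n) := hsucc n
      _ ≤ log n + 1 + exp (-(log n + 1)) := add_exp_neg_le_add_exp_neg (hnonneg n) ih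
      _ ≤ log (n + 1 : ℕ) + 1 := by
        push_cast
        exact log_add_one_add_exp_neg_le (by exact_mod_cast hn)

/-- Let `a 1 = c·ν` and `a t = c·ν·exp(-(∑_{i=1}^{t-1} a i)/(c·ν))` for `t > 1`, where
`c, ν > 0`. Then `∑_{t=1}^n a t ≤ c·ν·(log n + 1)` for all `n ≥ 1`. -/
theorem sum_decaying_seq_le (c ν : ℝ) (hc : 0 < c) (hν : 0 < ν) (a : ℕ → ℝ)
    (h1 : a 1 = c * ν)
    (hrec : ∀ t : ℕ, 1 < t →
      a t = c * ν * Real.exp (-(∑ i ∈ Finset.Icc 1 (t - 1), a i) / (c * ν))) :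
    ∀ n : ℕ, 1 ≤ n → ∑ t ∈ Finset.Icc 1 n, a t ≤ c * ν * (Real.log n + 1) := by
  intro n hn
  set K := c * ν
  have hK : 0 < K := mul_pos hc hν
  set S : ℕ → ℝ := fun n => ∑ t ∈ Icc 1 n, a t
  -- the recursion also holds at `t = 1`, where the empty sum gives `exp 0 = 1`
  have hstep : ∀ n, a (n + 1) = K * exp (-S n / K) := by
    rintro (_ | n)
    · simp [S, h1]
    · exact hrec (n + 2) (by omega)
  have hbound : S n / K ≤ log n + 1 := by
    refine le_log_add_one_of_add_exp_neg (s := fun n => S n / K) (by simp [S]) (fun n => ?_) hn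
    rw [show S (n + 1) = S n + a (n + 1) from sum_Icc_succ_top (by omega) a, hstep, neg_div]
    field_simp
  calc S n = K * (S n / K) := by field_simp
    _ ≤ K * (log n + 1) := by gcongr
end

section
/- Let 0 < p < q < 1 with q ≤ 2p (i.e., q = (1+ε)p with 0 < ε ≤ 1). Then the KL divergence D(p‖q) = p·log(p/q) + (1-p)·log((1-p)/(1-q)) satisfies D(p‖q) ≤ (1 + 1/(4(1-q)²))·(ε²p/2), and consequently (q-p)/D(p‖q) ≥ (4(1-q)²/(4(1-q)²+1))·(1/p)/((1/p) - (1/q)). -/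
/-!
Both summands of `D(p‖q)` have the form `a log (a / b)`, and for such a term the second-order
bound `a log (a / b) ≤ (a - b) + (a - b)² / (2 min a b)` follows from two classical
estimates: `x - x²/2 ≤ log (1 + x)` for `x ≥ 0`, and `log t ≤ sinh (log t) = (t - t⁻¹)/2` for
`t ≥ 1`.
The linear terms cancel, leaving `D(p‖q) ≤ (q-p)²/(2p) + (q-p)²/(2(1-q))`, and `4p(1-q) ≤ 1`
turns the second fraction into `(q-p)²/(8p(1-q)²)`. The second claim follows from the first
because `D(p‖q) > 0` and `q ≤ 2p`.
-/

open Real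

noncomputable def binaryKL (p q : ℝ) : ℝ :=
  p * log (p / q) + (1 - p) * log ((1 - p) / (1 - q))

lemma sub_sq_div_two_le_log_one_add {x : ℝ} (hx : 0 ≤ x) : x - x ^ 2 / 2 ≤ log (1 + x) := by
  refine le_trans ?_ (le_log_one_add_of_nonneg hx)
  rw [le_div_iff₀ (by positivity)]
  nlinarith [pow_nonneg hx 3]

lemma log_le_sub_inv_div_two {t : ℝ} (ht : 1 ≤ t) : log t ≤ (t - t⁻¹) / 2 := by
  rw [← sinh_log (by positivity)]
  exact self_le_sinh_iff.mpr (log_nonneg ht)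

lemma sub_lt_mul_log_div {a b : ℝ} (ha : 0 < a) (hb : 0 < b) (hab : a ≠ b) :
    a - b < a * log (a / b) := by
  have hlog : log (b / a) < b / a - 1 :=
    log_lt_sub_one_of_pos (by positivity) (by rwa [ne_eq, div_eq_one_iff_eq ha.ne', eq_comm])
  rw [← neg_neg (log (a / b)), ← log_inv, inv_div]
  have : a * (b / a - 1) = b - a := by field_simp
  nlinarith

lemma mul_log_div_le_of_le {a b : ℝ} (ha : 0 < a) (hab : a ≤ b) :
    a * log (a / b) ≤ (a - b) + (b - a) ^ 2 / (2 * a) := by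
  have hlog := sub_sq_div_two_le_log_one_add (div_nonneg (sub_nonneg.mpr hab) ha.le)
  rw [show 1 + (b - a) / a = b / a by field_simp; ring] at hlog
  rw [← neg_neg (log (a / b)), ← log_inv, inv_div]
  calc a * -log (b / a) ≤ a * -((b - a) / a - ((b - a) / a) ^ 2 / 2) := by gcongr
    _ = (a - b) + (b - a) ^ 2 / (2 * a) := by field_simp; ring

lemma mul_log_div_le_of_ge {a b : ℝ} (hb : 0 < b) (hba : b ≤ a) :
    a * log (a / b) ≤ (a - b) + (a - b) ^ 2 / (2 * b) := by
  have ha : 0 < a := hb.trans_le hba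
  calc a * log (a / b) ≤ a * ((a / b - (a / b)⁻¹) / 2) := by
        gcongr
        exact log_le_sub_inv_div_two ((one_le_div hb).mpr hba)
    _ = (a - b) + (a - b) ^ 2 / (2 * b) := by field_simp; ring

lemma binaryKL_pos {p q : ℝ} (hp : 0 < p) (hpq : p < q) (hq : q < 1) : 0 < binaryKL p q := by
  have h₁ := sub_lt_mul_log_div hp (hp.trans hpq) hpq.ne
  have h₂ := sub_lt_mul_log_div (a := 1 - p) (b := 1 - q) (by linarith) (by linarith)
    (by linarith)
  unfold binaryKL
  linarith

lemma binaryKL_le_sq_div_add_sq_div {p q : ℝ} (hp : 0 < p) (hpq : p ≤ q) (hq : q < 1) :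
    binaryKL p q ≤ (q - p) ^ 2 / (2 * p) + (q - p) ^ 2 / (2 * (1 - q)) := by
  have h₁ := mul_log_div_le_of_le hp hpq
  have h₂ := mul_log_div_le_of_ge (a := 1 - p) (b := 1 - q) (by linarith) (by linarith)
  rw [show 1 - p - (1 - q) = q - p by ring] at h₂
  unfold binaryKL
  linarith

lemma binaryKL_le_mul_half_sq {p q : ℝ} (hp : 0 < p) (hpq : p ≤ q) (hq : q < 1) :
    binaryKL p q ≤ (1 + 1 / (4 * (1 - q) ^ 2)) * ((q / p - 1) ^ 2 * p / 2) := by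
  have h1q : 0 < 1 - q := by linarith
  have h4 : 4 * p * (1 - q) ≤ 1 := by nlinarith [sq_nonneg (2 * q - 1)]
  calc binaryKL p q ≤ (q - p) ^ 2 / (2 * p) + (q - p) ^ 2 / (2 * (1 - q)) :=
        binaryKL_le_sq_div_add_sq_div hp hpq hq
    _ ≤ (q - p) ^ 2 / (2 * p) + (q - p) ^ 2 / (8 * p * (1 - q) ^ 2) := by
        gcongr (q - p) ^ 2 / (2 * p) + (q - p) ^ 2 / ?_
        nlinarith
    _ = (1 + 1 / (4 * (1 - q) ^ 2)) * ((q / p - 1) ^ 2 * p / 2) := by field_simp; ring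

/-- For `0 < p < q < 1` with `q ≤ 2p` (so `ε = q/p - 1 ∈ (0,1]`), the binary KL divergence
`D(p‖q) = p·log(p/q) + (1-p)·log((1-p)/(1-q))` satisfies
`D(p‖q) ≤ (1 + 1/(4(1-q)²))·(ε²p/2)`, and consequently
`(q-p)/D(p‖q) ≥ (4(1-q)²/(4(1-q)²+1))·(1/p)/((1/p) - (1/q))`. -/
theorem kl_bound_small_eps (p q : ℝ) (hp : 0 < p) (hpq : p < q) (hq : q < 1)
    (h2 : q ≤ 2 * p) :
    p * Real.log (p / q) + (1 - p) * Real.log ((1 - p) / (1 - q))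
      ≤ (1 + 1 / (4 * (1 - q) ^ 2)) * ((q / p - 1) ^ 2 * p / 2) ∧
    (4 * (1 - q) ^ 2 / (4 * (1 - q) ^ 2 + 1)) * ((1 / p) / (1 / p - 1 / q))
      ≤ (q - p) /
        (p * Real.log (p / q) + (1 - p) * Real.log ((1 - p) / (1 - q))) := by
  have hD := binaryKL_le_mul_half_sq hp hpq.le hq
  refine ⟨hD, ?_⟩
  set B := (1 + 1 / (4 * (1 - q) ^ 2)) * ((q / p - 1) ^ 2 * p / 2) with hB
  have hq0 : 0 < q := hp.trans hpq
  have h1q : 0 < 1 - q := by linarith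
  have hqp : 0 < q - p := by linarith
  calc (4 * (1 - q) ^ 2 / (4 * (1 - q) ^ 2 + 1)) * ((1 / p) / (1 / p - 1 / q))
        = q / (2 * p) * ((q - p) / B) := by rw [hB]; field_simp
    _ ≤ 1 * ((q - p) / B) := by
        gcongr
        rwa [div_le_one (by positivity)]
    _ ≤ (q - p) / binaryKL p q := by
        rw [one_mul]
        exact div_le_div_of_nonneg_left hqp.le (binaryKL_pos hp hpq hq) hD
end

section
/- Let X₁, X₂, … be {0,1}-valued random variables adapted to a filtration generated by Y₁, Y₂, …, with P_i = Pr[X_i = 1 | Y₁,…,Y_{i-1}]. Fix r > 0 and let τ be the last index i with Σ_{j=1}^i P_j ≤ r; assume τ is almost surely bounded by some constant m. Then for any 0 < δ ≤ 1, Pr[Σ_{i=1}^τ X_i > (1+δ)r] ≤ exp(-δ²r/3). -/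
/-!
Conditionally on `ℱ (i - 1)`, the factor `(1 + δ X_i) e^{-δ P_i}` has mean
`(1 + δ P_i) e^{-δ P_i} ≤ 1`, so the product of these factors is a nonnegative supermartingale
with initial value `1`. The event `{i ≤ τ}` is decided by `P_1, …, P_i`, hence is
`ℱ (i - 1)`-measurable, so this survives stopping `X` and `P` at `τ`. At the horizon `m ≥ τ` the
stopped product is `exp (log (1 + δ) S - δ C)` with `S = ∑_{i ≤ τ} X_i` and `C = ∑_{i ≤ τ} P_i ≤ r`,
and Markov's inequality bounds `Pr[S > (1 + δ) r]` by `exp (δ r - (1 + δ) log (1 + δ) r)`. This is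
at most `exp (-δ² r / 3)` because `(1 + δ) log (1 + δ) ≥ δ + δ² / 3` for `0 ≤ δ ≤ 1`.
-/

open MeasureTheory ProbabilityTheory Real Finset

lemma add_sq_div_three_le_one_add_mul_log_one_add {x : ℝ} (h0 : 0 ≤ x) (h1 : x ≤ 1) :
    x + x ^ 2 / 3 ≤ (1 + x) * log (1 + x) :=
  calc x + x ^ 2 / 3 ≤ (1 + x) * (2 * x / (x + 2)) := by
        rw [mul_div_assoc', le_div_iff₀ (by linarith)]
        nlinarith [mul_nonneg (sq_nonneg x) (sub_nonneg.2 h1)]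
    _ ≤ (1 + x) * log (1 + x) := by
        gcongr
        exact le_log_one_add_of_nonneg h0

noncomputable def chernoffFactor (δ z p : ℝ) : ℝ := (1 + δ * z) * exp (-(δ * p))

section ChernoffFactor

variable {δ z p : ℝ}

lemma chernoffFactor_nonneg (hδ : 0 ≤ δ) (hz : 0 ≤ z) : 0 ≤ chernoffFactor δ z p :=
  mul_nonneg (by nlinarith) (exp_pos _).le

lemma chernoffFactor_le (hδ : 0 ≤ δ) (hz1 : z ≤ 1) (hp : 0 ≤ p) :
    chernoffFactor δ z p ≤ 1 + δ := by
  have hexp : exp (-(δ * p)) ≤ 1 := by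
    rw [exp_le_one_iff, neg_nonpos]
    exact mul_nonneg hδ hp
  calc chernoffFactor δ z p ≤ (1 + δ) * 1 :=
        mul_le_mul (by nlinarith) hexp (exp_pos _).le (by linarith)
    _ = 1 + δ := mul_one _

lemma chernoffFactor_eq_exp (hδ : -1 < δ) (hz : z = 0 ∨ z = 1) :
    chernoffFactor δ z p = exp (log (1 + δ) * z - δ * p) := by
  rw [sub_eq_add_neg, exp_add, chernoffFactor]
  congr 1
  rcases hz with rfl | rfl
  · simp
  · rw [mul_one, mul_one, exp_log (by linarith)]

lemma chernoffFactor_self_le_one (δ p : ℝ) : chernoffFactor δ p p ≤ 1 :=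
  calc chernoffFactor δ p p = exp (-(δ * p)) * (1 + δ * p) := mul_comm _ _
    _ ≤ exp (-(δ * p)) * exp (δ * p) := by gcongr; linarith [add_one_le_exp (δ * p)]
    _ = 1 := by rw [← exp_add, neg_add_cancel, exp_zero]

end ChernoffFactor

section ExponentialSupermartingale

variable {Ω : Type*} {m0 : MeasurableSpace Ω} {μ : Measure Ω}

lemma Measurable.chernoffFactor {m : MeasurableSpace Ω} {Z q : Ω → ℝ} (δ : ℝ)
    (hZ : Measurable[m] Z) (hq : Measurable[m] q) :
    Measurable[m] fun ω => chernoffFactor δ (Z ω) (q ω) :=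
  ((hZ.const_mul δ).const_add 1).mul (hq.const_mul δ).neg.exp

lemma condExp_chernoffFactor_le_one [IsFiniteMeasure μ] {m : MeasurableSpace Ω}
    (hm : m ≤ m0) {Z q : Ω → ℝ} {δ : ℝ} (hδ : 0 ≤ δ) (hZ : Integrable Z μ)
    (hq : Measurable[m] q) (hq0 : ∀ ω, 0 ≤ q ω) (hqZ : q =ᵐ[μ] μ[Z | m]) :
    μ[fun ω => chernoffFactor δ (Z ω) (q ω) | m] ≤ᵐ[μ] 1 := by
  set E : Ω → ℝ := fun ω => exp (-(δ * q ω))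
  have hE : Measurable[m] E := (hq.const_mul δ).neg.exp
  have hE_le : ∀ ω, ‖E ω‖ ≤ 1 := fun ω => by
    rw [norm_of_nonneg (exp_pos _).le, exp_le_one_iff, neg_nonpos]
    exact mul_nonneg hδ (hq0 ω)
  have hlin : Integrable (fun ω => 1 + δ * Z ω) μ := (integrable_const 1).add (hZ.const_mul δ)
  have hpull : μ[E * fun ω => 1 + δ * Z ω | m] =ᵐ[μ] E * μ[fun ω => 1 + δ * Z ω | m] :=
    condExp_mul_of_stronglyMeasurable_left hE.stronglyMeasurable
      (hlin.bdd_mul (hE.mono hm le_rfl).aestronglyMeasurable (ae_of_all _ hE_le)) hlin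
  have hlin_cond : μ[fun ω => 1 + δ * Z ω | m] =ᵐ[μ] fun ω => 1 + δ * μ[Z | m] ω := by
    filter_upwards [condExp_add (integrable_const 1) (hZ.const_mul δ) m,
      condExp_smul δ Z m] with ω h_add h_smul
    calc μ[fun ω => 1 + δ * Z ω | m] ω = (μ[fun _ => (1 : ℝ) | m] + μ[δ • Z | m]) ω := h_add
      _ = 1 + δ * μ[Z | m] ω := by rw [Pi.add_apply, condExp_const hm, h_smul]; rfl
  have hfactor : (fun ω => chernoffFactor δ (Z ω) (q ω)) = E * fun ω => 1 + δ * Z ω := by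
    ext ω
    exact mul_comm _ _
  rw [hfactor]
  filter_upwards [hpull, hlin_cond, hqZ] with ω h_pull h_lin h_q
  rw [h_pull, Pi.mul_apply, h_lin, ← h_q]
  exact (mul_comm _ _).trans_le (chernoffFactor_self_le_one δ (q ω))

noncomputable def chernoffProduct (δ : ℝ) (Z q : ℕ → Ω → ℝ) (n : ℕ) (ω : Ω) : ℝ :=
  ∏ i ∈ Icc 1 n, chernoffFactor δ (Z i ω) (q i ω)

variable {δ : ℝ} {Z q : ℕ → Ω → ℝ}

@[simp]
lemma chernoffProduct_zero : chernoffProduct δ Z q 0 = 1 := by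
  ext ω
  simp [chernoffProduct]

lemma chernoffProduct_succ (n : ℕ) :
    chernoffProduct δ Z q (n + 1) =
      chernoffProduct δ Z q n * fun ω => chernoffFactor δ (Z (n + 1) ω) (q (n + 1) ω) :=
  funext fun _ => prod_Icc_succ_top (by omega) _

lemma chernoffProduct_nonneg (hδ : 0 ≤ δ) (hZ0 : ∀ i ω, 0 ≤ Z i ω) (n : ℕ) (ω : Ω) :
    0 ≤ chernoffProduct δ Z q n ω :=
  prod_nonneg fun i _ => chernoffFactor_nonneg hδ (hZ0 i ω)

lemma chernoffProduct_le_pow (hδ : 0 ≤ δ) (hZ0 : ∀ i ω, 0 ≤ Z i ω) (hZ1 : ∀ i ω, Z i ω ≤ 1)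
    (hq0 : ∀ i ω, 0 ≤ q i ω) (n : ℕ) (ω : Ω) : chernoffProduct δ Z q n ω ≤ (1 + δ) ^ n :=
  calc chernoffProduct δ Z q n ω ≤ ∏ _i ∈ Icc 1 n, (1 + δ) :=
        prod_le_prod (fun i _ => chernoffFactor_nonneg hδ (hZ0 i ω))
          fun i _ => chernoffFactor_le hδ (hZ1 i ω) (hq0 i ω)
    _ = (1 + δ) ^ n := by simp

lemma chernoffProduct_eq_exp (hδ : -1 < δ) (hZ : ∀ i ω, Z i ω = 0 ∨ Z i ω = 1) (n : ℕ) (ω : Ω) :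
    chernoffProduct δ Z q n ω =
      exp (log (1 + δ) * ∑ i ∈ Icc 1 n, Z i ω - δ * ∑ i ∈ Icc 1 n, q i ω) := by
  rw [chernoffProduct, prod_congr rfl fun i _ => chernoffFactor_eq_exp hδ (hZ i ω), ← exp_sum,
    sum_sub_distrib, mul_sum, mul_sum]

section Filtration

variable (ℱ : Filtration ℕ m0)

lemma measurable_chernoffProduct (hZ : ∀ i, Measurable[ℱ (i + 1)] (Z (i + 1)))
    (hq : ∀ i, Measurable[ℱ i] (q (i + 1))) (n : ℕ) :
    Measurable[ℱ n] (chernoffProduct δ Z q n) := by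
  induction n with
  | zero => rw [chernoffProduct_zero]; exact measurable_const
  | succ n ih =>
    rw [chernoffProduct_succ]
    exact (ih.mono (ℱ.mono n.le_succ) le_rfl).mul
      ((hZ n).chernoffFactor δ ((hq n).mono (ℱ.mono n.le_succ) le_rfl))

variable [IsFiniteMeasure μ] (hδ : 0 ≤ δ) (hZ0 : ∀ i ω, 0 ≤ Z i ω) (hZ1 : ∀ i ω, Z i ω ≤ 1)
  (hq0 : ∀ i ω, 0 ≤ q i ω) (hZ : ∀ i, Measurable[ℱ (i + 1)] (Z (i + 1)))
  (hq : ∀ i, Measurable[ℱ i] (q (i + 1)))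
include hδ hZ0 hZ1 hq0 hZ hq

lemma integrable_chernoffProduct (n : ℕ) : Integrable (chernoffProduct δ Z q n) μ :=
  .of_bound ((measurable_chernoffProduct ℱ hZ hq n).mono (ℱ.le n) le_rfl).aestronglyMeasurable
    ((1 + δ) ^ n) <| ae_of_all _ fun ω => by
      rw [norm_of_nonneg (chernoffProduct_nonneg hδ hZ0 n ω)]
      exact chernoffProduct_le_pow hδ hZ0 hZ1 hq0 n ω

theorem supermartingale_chernoffProduct (hqZ : ∀ i, q (i + 1) =ᵐ[μ] μ[Z (i + 1) | ℱ i]) :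
    Supermartingale (chernoffProduct δ Z q) ℱ μ := by
  refine supermartingale_nat (fun n => (measurable_chernoffProduct ℱ hZ hq n).stronglyMeasurable)
    (integrable_chernoffProduct ℱ hδ hZ0 hZ1 hq0 hZ hq) fun n => ?_
  have hZ_int : Integrable (Z (n + 1)) μ :=
    .of_bound ((hZ n).mono (ℱ.le _) le_rfl).aestronglyMeasurable 1 <| ae_of_all _ fun ω => by
      rw [norm_of_nonneg (hZ0 _ ω)]
      exact hZ1 _ ω
  have hfactor_int : Integrable (fun ω => chernoffFactor δ (Z (n + 1) ω) (q (n + 1) ω)) μ :=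
    .of_bound (((hZ n).chernoffFactor δ ((hq n).mono (ℱ.mono n.le_succ) le_rfl)).mono
      (ℱ.le _) le_rfl).aestronglyMeasurable (1 + δ) <| ae_of_all _ fun ω => by
        rw [norm_of_nonneg (chernoffFactor_nonneg hδ (hZ0 _ ω))]
        exact chernoffFactor_le hδ (hZ1 _ ω) (hq0 _ ω)
  have hprod_int := integrable_chernoffProduct ℱ hδ hZ0 hZ1 hq0 hZ hq (μ := μ) (n + 1)
  rw [chernoffProduct_succ] at hprod_int ⊢
  have hpull := condExp_mul_of_stronglyMeasurable_left
    (measurable_chernoffProduct ℱ hZ hq n).stronglyMeasurable hprod_int hfactor_int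
  filter_upwards [hpull, condExp_chernoffFactor_le_one (ℱ.le n) hδ hZ_int (hq n) (hq0 _) (hqZ n)]
    with ω h_pull h_factor
  rw [h_pull, Pi.mul_apply]
  exact mul_le_of_le_one_right (chernoffProduct_nonneg hδ hZ0 n ω) h_factor

end Filtration

theorem measure_lt_sum_le_exp_of_sum_le [IsProbabilityMeasure μ] (ℱ : Filtration ℕ m0)
    (hZ01 : ∀ i ω, Z i ω = 0 ∨ Z i ω = 1) (hZ : ∀ i, Measurable[ℱ (i + 1)] (Z (i + 1)))
    (hq0 : ∀ i ω, 0 ≤ q i ω) (hq : ∀ i, Measurable[ℱ i] (q (i + 1)))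
    (hqZ : ∀ i, q (i + 1) =ᵐ[μ] μ[Z (i + 1) | ℱ i]) {r : ℝ} (hr : 0 ≤ r) (hδ0 : 0 ≤ δ)
    (hδ1 : δ ≤ 1) (n : ℕ) (hqr : ∀ ω, ∑ i ∈ Icc 1 n, q i ω ≤ r) :
    μ {ω | (1 + δ) * r < ∑ i ∈ Icc 1 n, Z i ω} ≤ ENNReal.ofReal (exp (-(δ ^ 2) * r / 3)) := by
  have hZ0 : ∀ i ω, 0 ≤ Z i ω := fun i ω => by rcases hZ01 i ω with h | h <;> simp [h]
  have hZ1 : ∀ i ω, Z i ω ≤ 1 := fun i ω => by rcases hZ01 i ω with h | h <;> simp [h]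
  set ε := exp ((1 + δ) * r * log (1 + δ) - δ * r)
  have hintegral : ∫ ω, chernoffProduct δ Z q n ω ∂μ ≤ 1 := by
    simpa using (supermartingale_chernoffProduct ℱ hδ0 hZ0 hZ1 hq0 hZ hq hqZ).setIntegral_le
      n.zero_le MeasurableSet.univ
  have hsub : {ω | (1 + δ) * r < ∑ i ∈ Icc 1 n, Z i ω} ⊆
      {ω | ε ≤ chernoffProduct δ Z q n ω} := fun ω (hω : (1 + δ) * r < _) => by
    change ε ≤ _
    rw [chernoffProduct_eq_exp (by linarith) hZ01, exp_le_exp]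
    have hlog : 0 ≤ log (1 + δ) := log_nonneg (by linarith)
    nlinarith [mul_le_mul_of_nonneg_left hω.le hlog, mul_le_mul_of_nonneg_left (hqr ω) hδ0]
  have hmarkov : μ.real {ω | ε ≤ chernoffProduct δ Z q n ω} ≤ 1 / ε :=
    (le_div_iff₀' (exp_pos _)).2 <| (mul_meas_ge_le_integral_of_nonneg
      (ae_of_all _ (chernoffProduct_nonneg hδ0 hZ0 n))
      (integrable_chernoffProduct ℱ hδ0 hZ0 hZ1 hq0 hZ hq n) ε).trans hintegral
  have hε : 1 / ε ≤ exp (-(δ ^ 2) * r / 3) := by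
    rw [one_div, ← exp_neg, exp_le_exp]
    nlinarith [mul_le_mul_of_nonneg_right (add_sq_div_three_le_one_add_mul_log_one_add hδ0 hδ1) hr]
  calc μ {ω | (1 + δ) * r < ∑ i ∈ Icc 1 n, Z i ω}
      ≤ μ {ω | ε ≤ chernoffProduct δ Z q n ω} := measure_mono hsub
    _ = ENNReal.ofReal (μ.real {ω | ε ≤ chernoffProduct δ Z q n ω}) := (ofReal_measureReal).symm
    _ ≤ ENNReal.ofReal (exp (-(δ ^ 2) * r / 3)) := ENNReal.ofReal_le_ofReal (hmarkov.trans hε)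

end ExponentialSupermartingale

lemma sum_Icc_ite_le_of_le {M : Type*} [AddCommMonoid M] (f : ℕ → M) {k n : ℕ} (hkn : k ≤ n) :
    ∑ i ∈ Icc 1 n, (if i ≤ k then f i else 0) = ∑ i ∈ Icc 1 k, f i := by
  rw [← sum_filter]
  congr 1
  ext i
  simp only [mem_filter, mem_Icc]
  omega

lemma le_iff_sum_Icc_le_of_isGreatest {P : ℕ → ℝ} {r : ℝ} {τ : ℕ} (hP0 : ∀ j, 0 ≤ P j)
    (hτ : IsGreatest {i | ∑ j ∈ Icc 1 i, P j ≤ r} τ) (i : ℕ) :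
    i ≤ τ ↔ ∑ j ∈ Icc 1 i, P j ≤ r :=
  ⟨fun hi => (sum_le_sum_of_subset_of_nonneg (Icc_subset_Icc_right hi) fun j _ _ => hP0 j).trans
    hτ.1, fun hi => hτ.2 hi⟩

lemma measurableSet_succ_le_of_isGreatest {Ω : Type*} {m0 : MeasurableSpace Ω}
    (ℱ : Filtration ℕ m0) {P : ℕ → Ω → ℝ} {r : ℝ} {τ : Ω → ℕ} (hP0 : ∀ i ω, 0 ≤ P i ω)
    (hP : ∀ i, Measurable[ℱ i] (P (i + 1)))
    (hτ : ∀ ω, IsGreatest {i | ∑ j ∈ Icc 1 i, P j ω ≤ r} (τ ω)) (i : ℕ) :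
    MeasurableSet[ℱ i] {ω | i + 1 ≤ τ ω} := by
  have hset : {ω | i + 1 ≤ τ ω} = {ω | ∑ j ∈ Icc 1 (i + 1), P j ω ≤ r} := by
    ext ω
    exact le_iff_sum_Icc_le_of_isGreatest (hP0 · ω) (hτ ω) _
  rw [hset]
  refine measurableSet_le (Finset.measurable_sum _ fun j hj => ?_) measurable_const
  obtain ⟨k, rfl⟩ : ∃ k, j = k + 1 := ⟨j - 1, by grind⟩
  exact (hP k).mono (ℱ.mono (by grind)) le_rfl

/-- Martingale upper-tail Chernoff bound: let `X i ∈ {0,1}` be adapted to a filtration `ℱ`,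
with conditional probabilities `P i = Pr[X i = 1 | ℱ (i-1)]`. Fix `r > 0` and let `τ ω` be
the last index `i` with `∑_{j=1}^i P j ω ≤ r`; assume `τ ≤ m` surely. Then for any
`0 < δ ≤ 1`, `Pr[∑_{i=1}^τ X i > (1+δ)r] ≤ exp(-δ²r/3)`. -/
theorem martingale_chernoff_upper {Ω : Type*} [MeasurableSpace Ω]
    (μ : Measure Ω) [IsProbabilityMeasure μ]
    (ℱ : ℕ → MeasurableSpace Ω) (hℱ : ∀ i, ℱ i ≤ ‹MeasurableSpace Ω›)
    (hℱmono : Monotone ℱ)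
    (X P : ℕ → Ω → ℝ)
    (hX01 : ∀ i ω, X i ω = 0 ∨ X i ω = 1)
    (hXmeas : ∀ i, Measurable[ℱ i] (X i))
    (hP0 : ∀ i ω, 0 ≤ P i ω)
    (hPmeas : ∀ i : ℕ, 1 ≤ i → Measurable[ℱ (i - 1)] (P i))
    (hP : ∀ i : ℕ, 1 ≤ i → P i =ᵐ[μ] μ[X i | ℱ (i - 1)])
    (r : ℝ) (hr : 0 < r) (m : ℕ) (τ : Ω → ℕ)
    (hτlast : ∀ ω, (∑ j ∈ Finset.Icc 1 (τ ω), P j ω ≤ r) ∧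
      ∀ i : ℕ, (∑ j ∈ Finset.Icc 1 i, P j ω ≤ r) → i ≤ τ ω)
    (hτm : ∀ ω, τ ω ≤ m)
    (δ : ℝ) (hδ0 : 0 < δ) (hδ1 : δ ≤ 1) :
    μ {ω | (1 + δ) * r < ∑ i ∈ Finset.Icc 1 (τ ω), X i ω}
      ≤ ENNReal.ofReal (Real.exp (-(δ ^ 2) * r / 3)) := by
  let 𝓕 : Filtration ℕ _ := ⟨ℱ, hℱmono, hℱ⟩
  have hPpred : ∀ i, Measurable[ℱ i] (P (i + 1)) := fun i => by
    simpa using hPmeas (i + 1) i.succ_pos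
  have hstop : ∀ i, MeasurableSet[ℱ i] {ω | i + 1 ≤ τ ω} :=
    measurableSet_succ_le_of_isGreatest 𝓕 hP0 hPpred hτlast
  have hstopped : ∀ (f : ℕ → Ω → ℝ) ω,
      ∑ i ∈ Icc 1 m, {ω | i ≤ τ ω}.indicator (f i) ω = ∑ i ∈ Icc 1 (τ ω), f i ω := fun f ω => by
    simp only [Set.indicator_apply, Set.mem_ofPred_eq]
    exact sum_Icc_ite_le_of_le _ (hτm ω)
  have hX_int : ∀ i, Integrable (X i) μ := fun i =>
    .of_bound ((hXmeas i).mono (hℱ i) le_rfl).aestronglyMeasurable 1 <| ae_of_all _ fun ω => by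
      rcases hX01 i ω with h | h <;> simp [h]
  simp_rw [← hstopped X]
  refine measure_lt_sum_le_exp_of_sum_le 𝓕 (Z := fun i => {ω | i ≤ τ ω}.indicator (X i))
    (q := fun i => {ω | i ≤ τ ω}.indicator (P i)) (fun i ω => ?_)
    (fun i => (hXmeas _).indicator (hℱmono i.le_succ _ (hstop i)))
    (fun i ω => Set.indicator_nonneg (fun j _ => hP0 i j) ω)
    (fun i => (hPpred i).indicator (hstop i))
    (fun i => ?_) hr.le hδ0.le hδ1 m fun ω => (hstopped P ω).trans_le (hτlast ω).1
  · by_cases h : i ≤ τ ω <;> simp [h, hX01 i ω]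
  · filter_upwards [show P (i + 1) =ᵐ[μ] μ[X (i + 1) | ℱ i] by simpa using hP (i + 1) i.succ_pos,
      condExp_indicator (hX_int (i + 1)) (hstop i)] with ω hPω hcond
    rw [hcond, Set.indicator_apply, Set.indicator_apply, hPω]
end

section
/- Let X₁, X₂, … be {0,1}-valued random variables adapted to a filtration, with conditional probabilities P_i = Pr[X_i = 1 | past]. Fix r > 0 and let τ be the first index i with Σ_{j=1}^i P_j > r; assume τ ≤ m almost surely for some constant m. Then for any 0 < δ ≤ 1, Pr[Σ_{i=1}^τ X_i < (1-δ)r] ≤ exp(-δ²r/2). -/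
open MeasureTheory ProbabilityTheory Real Finset

/-!
With `a = 1 - e^{-δ}`, the process `exp (a ∑_{j ≤ n} P j - δ ∑_{j ≤ n} X j)` is a
supermartingale: for `X ∈ {0, 1}` one has `e^{-δ X} = 1 - a X`, and replacing `X (n+1)` by its
conditional expectation `P (n+1)` leaves the factor `e^{a p} (1 - a p) ≤ 1`. Since
`{j ≤ τ}` is decided at time `j - 1`, the stopped sequences `1_{j ≤ τ} X j`, `1_{j ≤ τ} P j`
satisfy the same hypotheses, so `E exp (a ∑_{j ≤ τ} P j - δ ∑_{j ≤ τ} X j) ≤ 1`. On the event,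
`∑_{j ≤ τ} P j > r` and `∑_{j ≤ τ} X j < (1 - δ) r`, so the exponent exceeds
`(a - δ (1 - δ)) r ≥ δ² r / 2`, and Markov's inequality concludes.
-/

lemma exp_neg_le_one_sub_add_sq_div_two {x : ℝ} (hx : 0 ≤ x) :
    exp (-x) ≤ 1 - x + x ^ 2 / 2 := by
  have hq := quadratic_le_exp_of_nonneg hx
  have hmul : exp (-x) * exp x = 1 := by rw [← exp_add]; simp
  have hnn : 0 ≤ 1 - x + x ^ 2 / 2 := by nlinarith [sq_nonneg (1 - x)]
  nlinarith [mul_le_mul_of_nonneg_left hq hnn, exp_pos x]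

lemma exp_mul_one_sub_le_one (x : ℝ) : exp x * (1 - x) ≤ 1 :=
  calc exp x * (1 - x) ≤ exp x * exp (-x) := by gcongr; exact one_sub_le_exp_neg x
    _ = 1 := by rw [← exp_add, add_neg_cancel, exp_zero]

lemma exp_neg_mul_of_eq_zero_or_one {y : ℝ} (hy : y = 0 ∨ y = 1) (δ : ℝ) :
    exp (-δ * y) = 1 - (1 - exp (-δ)) * y := by
  rcases hy with rfl | rfl <;> simp

section CondExp

variable {Ω : Type*} {m m₀ : MeasurableSpace Ω} {μ : Measure Ω}

lemma integral_mul_condExp (hm : m ≤ m₀) [SigmaFinite (μ.trim hm)] {H Y : Ω → ℝ}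
    (hH : StronglyMeasurable[m] H) (hHY : Integrable (H * Y) μ) (hY : Integrable Y μ) :
    ∫ ω, H ω * μ[Y | m] ω ∂μ = ∫ ω, H ω * Y ω ∂μ :=
  calc ∫ ω, H ω * μ[Y | m] ω ∂μ = ∫ ω, μ[H * Y | m] ω ∂μ :=
        integral_congr_ae (condExp_mul_of_stronglyMeasurable_left hH hHY hY).symm
    _ = ∫ ω, H ω * Y ω ∂μ := integral_condExp hm

variable [IsFiniteMeasure μ]

lemma integrable_of_eq_zero_or_one {Y : Ω → ℝ} (hY : ∀ ω, Y ω = 0 ∨ Y ω = 1)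
    (hY_meas : Measurable Y) : Integrable Y μ :=
  .of_bound hY_meas.aestronglyMeasurable 1
    (.of_forall fun ω ↦ by rcases hY ω with h | h <;> simp [h])

lemma integral_mul_exp_compensated_le (hm : m ≤ m₀) {G Y p : Ω → ℝ} (δ : ℝ)
    (hG : StronglyMeasurable[m] G) (hG_int : Integrable G μ) (hG_nonneg : 0 ≤ G)
    (hY : ∀ ω, Y ω = 0 ∨ Y ω = 1) (hY_meas : Measurable Y)
    (hp : StronglyMeasurable[m] p) (hp_eq : p =ᵐ[μ] μ[Y | m]) :
    Integrable (fun ω ↦ G ω * exp ((1 - exp (-δ)) * p ω - δ * Y ω)) μ ∧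
      ∫ ω, G ω * exp ((1 - exp (-δ)) * p ω - δ * Y ω) ∂μ ≤ ∫ ω, G ω ∂μ := by
  have := isFiniteMeasure_trim (μ := μ) hm
  set a := 1 - exp (-δ)
  have hY_abs : ∀ ω, |Y ω| ≤ 1 := fun ω ↦ by rcases hY ω with h | h <;> simp [h]
  have hY_int : Integrable Y μ := integrable_of_eq_zero_or_one hY hY_meas
  have hp_abs : ∀ᵐ ω ∂μ, |p ω| ≤ 1 := by
    filter_upwards [hp_eq, ae_bdd_abs_condExp_of_ae_bdd_abs (m := m) (.of_forall hY_abs)]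
      with ω hω hω'
    rwa [hω]
  set H : Ω → ℝ := fun ω ↦ G ω * exp (a * p ω)
  have hH : StronglyMeasurable[m] H :=
    hG.mul (continuous_exp.comp_stronglyMeasurable (hp.const_mul a))
  have hH_int : Integrable H μ := by
    refine hG_int.mul_bdd (c := exp |a|)
      ((continuous_exp.comp_stronglyMeasurable (hp.const_mul a)).mono hm).aestronglyMeasurable ?_
    filter_upwards [hp_abs] with ω hω
    rw [norm_of_nonneg (exp_pos _).le, exp_le_exp]
    calc a * p ω ≤ |a| * |p ω| := by rw [← abs_mul]; exact le_abs_self _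
      _ ≤ |a| := mul_le_of_le_one_right (abs_nonneg a) hω
  have hHY_int : Integrable (fun ω ↦ H ω * Y ω) μ :=
    hH_int.mul_bdd hY_meas.aestronglyMeasurable (.of_forall fun ω ↦ by simpa using hY_abs ω)
  have hHp_int : Integrable (fun ω ↦ H ω * p ω) μ :=
    hH_int.mul_bdd (hp.mono hm).aestronglyMeasurable (by simpa using hp_abs)
  have hsplit : (fun ω ↦ G ω * exp (a * p ω - δ * Y ω)) = fun ω ↦ H ω - a * (H ω * Y ω) := by
    ext ω
    rw [sub_eq_add_neg, exp_add, ← neg_mul, exp_neg_mul_of_eq_zero_or_one (hY ω)]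
    ring
  have hcompensate : ∫ ω, H ω * Y ω ∂μ = ∫ ω, H ω * p ω ∂μ := by
    rw [← integral_mul_condExp hm hH hHY_int hY_int]
    exact integral_congr_ae (by filter_upwards [hp_eq] with ω hω; rw [hω])
  refine ⟨hsplit ▸ hH_int.sub (hHY_int.const_mul a), ?_⟩
  calc ∫ ω, G ω * exp (a * p ω - δ * Y ω) ∂μ
      = ∫ ω, (H ω - a * (H ω * p ω)) ∂μ := by
        rw [hsplit, integral_sub hH_int (hHY_int.const_mul a), integral_const_mul,
          integral_sub hH_int (hHp_int.const_mul a), integral_const_mul, ← hcompensate]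
    _ ≤ ∫ ω, G ω ∂μ := by
        refine integral_mono (hH_int.sub (hHp_int.const_mul a)) hG_int fun ω ↦ ?_
        calc H ω - a * (H ω * p ω) = G ω * (exp (a * p ω) * (1 - a * p ω)) := by ring
          _ ≤ G ω * 1 := by gcongr; exacts [hG_nonneg ω, exp_mul_one_sub_le_one _]
          _ = G ω := mul_one _

end CondExp

section Compensator

variable {Ω : Type*} {m₀ : MeasurableSpace Ω}

structure IsBernoulliCompensator (μ : Measure Ω) (ℱ : Filtration ℕ m₀) (X P : ℕ → Ω → ℝ) :
    Prop where
  zero_or_one : ∀ i ω, X i ω = 0 ∨ X i ω = 1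
  measurable : ∀ i, 1 ≤ i → Measurable[ℱ i] (X i)
  measurable_compensator : ∀ i, 1 ≤ i → Measurable[ℱ (i - 1)] (P i)
  ae_eq_condExp : ∀ i, 1 ≤ i → P i =ᵐ[μ] μ[X i | ℱ (i - 1)]

noncomputable def chernoffExponent (X P : ℕ → Ω → ℝ) (δ : ℝ) (n : ℕ) (ω : Ω) : ℝ :=
  ∑ j ∈ Icc 1 n, ((1 - exp (-δ)) * P j ω - δ * X j ω)

lemma chernoffExponent_succ (X P : ℕ → Ω → ℝ) (δ : ℝ) (n : ℕ) (ω : Ω) :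
    chernoffExponent X P δ (n + 1) ω =
      chernoffExponent X P δ n ω + ((1 - exp (-δ)) * P (n + 1) ω - δ * X (n + 1) ω) :=
  sum_Icc_succ_top (by omega) _

namespace IsBernoulliCompensator

variable {μ : Measure Ω} {ℱ : Filtration ℕ m₀} {X P : ℕ → Ω → ℝ}

lemma measurable_chernoffExponent (h : IsBernoulliCompensator μ ℱ X P) (δ : ℝ) (n : ℕ) :
    Measurable[ℱ n] (chernoffExponent X P δ n) := by
  refine Finset.measurable_sum _ fun j hj ↦ ?_
  obtain ⟨hj1, hjn⟩ := mem_Icc.mp hj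
  exact (((h.measurable_compensator j hj1).mono (ℱ.mono (by omega)) le_rfl).const_mul _).sub
    (((h.measurable j hj1).mono (ℱ.mono hjn) le_rfl).const_mul _)

lemma integrable_and_integral_exp_chernoffExponent_le_one [IsProbabilityMeasure μ]
    (h : IsBernoulliCompensator μ ℱ X P) (δ : ℝ) (n : ℕ) :
    Integrable (fun ω ↦ exp (chernoffExponent X P δ n ω)) μ ∧
      ∫ ω, exp (chernoffExponent X P δ n ω) ∂μ ≤ 1 := by
  induction n with
  | zero => simp [chernoffExponent]
  | succ n ih =>
    simp only [chernoffExponent_succ, exp_add]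
    obtain ⟨hint, hle⟩ := integral_mul_exp_compensated_le (ℱ.le n) δ
      (continuous_exp.comp_stronglyMeasurable
        (h.measurable_chernoffExponent δ n).stronglyMeasurable) ih.1 (fun ω ↦ (exp_pos _).le)
      (h.zero_or_one (n + 1)) ((h.measurable (n + 1) (by omega)).mono (ℱ.le _) le_rfl)
      (by simpa using (h.measurable_compensator (n + 1) (by omega)).stronglyMeasurable)
      (by simpa using h.ae_eq_condExp (n + 1) (by omega))
    exact ⟨hint, hle.trans ih.2⟩

lemma indicator [IsFiniteMeasure μ] {A : ℕ → Set Ω} (h : IsBernoulliCompensator μ ℱ X P)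
    (hA : ∀ i, 1 ≤ i → MeasurableSet[ℱ (i - 1)] (A i)) :
    IsBernoulliCompensator μ ℱ (fun i ↦ (A i).indicator (X i)) (fun i ↦ (A i).indicator (P i)) where
  zero_or_one i ω := by
    by_cases hω : ω ∈ A i
    · simpa [hω] using h.zero_or_one i ω
    · simp [hω]
  measurable i hi := (h.measurable i hi).indicator (ℱ.mono (by omega) _ (hA i hi))
  measurable_compensator i hi := (h.measurable_compensator i hi).indicator (hA i hi)
  ae_eq_condExp i hi := by
    have hX_int : Integrable (X i) μ := integrable_of_eq_zero_or_one (h.zero_or_one i)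
      ((h.measurable i hi).mono (ℱ.le i) le_rfl)
    filter_upwards [h.ae_eq_condExp i hi, condExp_indicator hX_int (hA i hi)] with ω hP hc
    simp only [hc, Set.indicator, hP]

end IsBernoulliCompensator

end Compensator

section HittingTime

variable {Ω : Type*}

lemma setOf_le_eq_biInter_of_first_gt {S : ℕ → Ω → ℝ} {r : ℝ} {τ : Ω → ℕ}
    (hτ : ∀ ω, r < S (τ ω) ω ∧ ∀ i < τ ω, S i ω ≤ r) (j : ℕ) :
    {ω | j ≤ τ ω} = ⋂ i < j, {ω | S i ω ≤ r} := by
  ext ω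
  simp only [Set.mem_ofPred_eq, Set.mem_iInter]
  refine ⟨fun hj i hi ↦ (hτ ω).2 i (by omega), fun h ↦ ?_⟩
  by_contra! hτj
  exact (h _ hτj).not_gt (hτ ω).1

lemma sum_Icc_indicator_setOf_le {τ : Ω → ℕ} {m : ℕ} (f : ℕ → Ω → ℝ) {ω : Ω} (hτ : τ ω ≤ m) :
    ∑ j ∈ Icc 1 m, {ω | j ≤ τ ω}.indicator (f j) ω = ∑ j ∈ Icc 1 (τ ω), f j ω := by
  simp only [Set.indicator_apply, Set.mem_ofPred_eq, ← sum_filter]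
  congr 1
  ext j
  simp only [mem_filter, mem_Icc]
  omega

variable {m₀ : MeasurableSpace Ω}

lemma measurable_sum_Icc_of_predictable (ℱ : Filtration ℕ m₀) {P : ℕ → Ω → ℝ}
    (hP : ∀ i, 1 ≤ i → Measurable[ℱ (i - 1)] (P i)) (n : ℕ) :
    Measurable[ℱ (n - 1)] fun ω ↦ ∑ j ∈ Icc 1 n, P j ω := by
  refine Finset.measurable_sum _ fun j hj ↦ ?_
  obtain ⟨hj1, hjn⟩ := mem_Icc.mp hj
  exact (hP j hj1).mono (ℱ.mono (by omega)) le_rfl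

lemma measurableSet_setOf_le_of_first_gt (ℱ : Filtration ℕ m₀) {P : ℕ → Ω → ℝ}
    (hP : ∀ i, 1 ≤ i → Measurable[ℱ (i - 1)] (P i)) {r : ℝ} {τ : Ω → ℕ}
    (hτ : ∀ ω, r < ∑ j ∈ Icc 1 (τ ω), P j ω ∧ ∀ i < τ ω, ∑ j ∈ Icc 1 i, P j ω ≤ r) (j : ℕ) :
    MeasurableSet[ℱ (j - 1)] {ω | j ≤ τ ω} := by
  rw [setOf_le_eq_biInter_of_first_gt (S := fun i ω ↦ ∑ j ∈ Icc 1 i, P j ω) hτ]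
  exact .iInter fun i ↦ .iInter fun hi ↦ measurableSet_le
    ((measurable_sum_Icc_of_predictable ℱ hP i).mono (ℱ.mono (by omega)) le_rfl)
    measurable_const

end HittingTime

lemma measure_ge_le_exp_neg_of_integral_exp_le_one {Ω : Type*} {m₀ : MeasurableSpace Ω}
    {μ : Measure Ω} [IsFiniteMeasure μ] {Z : Ω → ℝ} (hZ_int : Integrable (fun ω ↦ exp (Z ω)) μ)
    (hZ : ∫ ω, exp (Z ω) ∂μ ≤ 1) (ε : ℝ) :
    μ {ω | ε ≤ Z ω} ≤ ENNReal.ofReal (exp (-ε)) := by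
  rw [← ofReal_measureReal]
  gcongr
  calc μ.real {ω | ε ≤ Z ω} ≤ exp (-1 * ε) * mgf Z μ 1 :=
        measure_ge_le_exp_mul_mgf ε zero_le_one (by simpa using hZ_int)
    _ ≤ exp (-ε) := by
        rw [neg_one_mul]
        exact mul_le_of_le_one_right (exp_pos _).le (by simpa [mgf] using hZ)

theorem martingale_chernoff_lower_general {Ω : Type*} [MeasurableSpace Ω]
    (μ : Measure Ω) [IsProbabilityMeasure μ]
    (ℱ : ℕ → MeasurableSpace Ω) (hℱ : ∀ i, ℱ i ≤ ‹MeasurableSpace Ω›)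
    (hℱmono : Monotone ℱ)
    (X P : ℕ → Ω → ℝ)
    (hX01 : ∀ i ω, X i ω = 0 ∨ X i ω = 1)
    (hXmeas : ∀ i, Measurable[ℱ i] (X i))
    (hPmeas : ∀ i : ℕ, 1 ≤ i → Measurable[ℱ (i - 1)] (P i))
    (hP : ∀ i : ℕ, 1 ≤ i → P i =ᵐ[μ] μ[X i | ℱ (i - 1)])
    (r : ℝ) (hr : 0 < r) (m : ℕ) (τ : Ω → ℕ)
    (hτfirst : ∀ ω, (r < ∑ j ∈ Finset.Icc 1 (τ ω), P j ω) ∧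
      ∀ i : ℕ, i < τ ω → ∑ j ∈ Finset.Icc 1 i, P j ω ≤ r)
    (hτm : ∀ ω, τ ω ≤ m)
    (δ : ℝ) (hδ0 : 0 < δ) :
    μ {ω | ∑ i ∈ Finset.Icc 1 (τ ω), X i ω < (1 - δ) * r}
      ≤ ENNReal.ofReal (Real.exp (-(δ ^ 2) * r / 2)) := by
  let 𝔽 : Filtration ℕ _ := ⟨ℱ, hℱmono, hℱ⟩
  have hstopped := IsBernoulliCompensator.integrable_and_integral_exp_chernoffExponent_le_one
    (IsBernoulliCompensator.indicator (ℱ := 𝔽) ⟨hX01, fun i _ ↦ hXmeas i, hPmeas, hP⟩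
      fun j _ ↦ measurableSet_setOf_le_of_first_gt 𝔽 hPmeas hτfirst j) δ m
  set Z := chernoffExponent (fun i ↦ {ω | i ≤ τ ω}.indicator (X i))
    (fun i ↦ {ω | i ≤ τ ω}.indicator (P i)) δ m
  set ε := (1 - exp (-δ) - δ * (1 - δ)) * r
  have hZ : ∀ ω, Z ω = (1 - exp (-δ)) * ∑ j ∈ Icc 1 (τ ω), P j ω
      - δ * ∑ j ∈ Icc 1 (τ ω), X j ω := fun ω ↦ by
    simp only [Z, chernoffExponent, sum_sub_distrib, ← mul_sum,
      sum_Icc_indicator_setOf_le _ (hτm ω)]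
  have hsub : {ω | ∑ i ∈ Icc 1 (τ ω), X i ω < (1 - δ) * r} ⊆ {ω | ε ≤ Z ω} := fun ω hω ↦ by
    have ha : 0 ≤ 1 - exp (-δ) := by simp [hδ0.le]
    simp only [Set.mem_ofPred_eq, hZ] at hω ⊢
    nlinarith [(hτfirst ω).1]
  calc μ {ω | ∑ i ∈ Icc 1 (τ ω), X i ω < (1 - δ) * r}
      ≤ μ {ω | ε ≤ Z ω} := measure_mono hsub
    _ ≤ ENNReal.ofReal (exp (-ε)) :=
        measure_ge_le_exp_neg_of_integral_exp_le_one hstopped.1 hstopped.2 ε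
    _ ≤ ENNReal.ofReal (exp (-(δ ^ 2) * r / 2)) := by
        gcongr
        nlinarith [exp_neg_le_one_sub_add_sq_div_two hδ0.le]

/-- Martingale lower-tail Chernoff bound: let `X i ∈ {0,1}` be adapted to a filtration `ℱ`,
with conditional probabilities `P i = Pr[X i = 1 | ℱ (i-1)]`. Fix `r > 0` and let `τ ω` be
the first index `i` with `∑_{j=1}^i P j ω > r`; assume `τ ≤ m` surely. Then for any
`0 < δ ≤ 1`, `Pr[∑_{i=1}^τ X i < (1-δ)r] ≤ exp(-δ²r/2)`. -/
theorem martingale_chernoff_lower {Ω : Type*} [MeasurableSpace Ω]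
    (μ : Measure Ω) [IsProbabilityMeasure μ]
    (ℱ : ℕ → MeasurableSpace Ω) (hℱ : ∀ i, ℱ i ≤ ‹MeasurableSpace Ω›)
    (hℱmono : Monotone ℱ)
    (X P : ℕ → Ω → ℝ)
    (hX01 : ∀ i ω, X i ω = 0 ∨ X i ω = 1)
    (hXmeas : ∀ i, Measurable[ℱ i] (X i))
    (hP0 : ∀ i ω, 0 ≤ P i ω)
    (hPmeas : ∀ i : ℕ, 1 ≤ i → Measurable[ℱ (i - 1)] (P i))
    (hP : ∀ i : ℕ, 1 ≤ i → P i =ᵐ[μ] μ[X i | ℱ (i - 1)])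
    (r : ℝ) (hr : 0 < r) (m : ℕ) (τ : Ω → ℕ)
    (hτfirst : ∀ ω, (r < ∑ j ∈ Finset.Icc 1 (τ ω), P j ω) ∧
      ∀ i : ℕ, i < τ ω → ∑ j ∈ Finset.Icc 1 i, P j ω ≤ r)
    (hτm : ∀ ω, τ ω ≤ m)
    (δ : ℝ) (hδ0 : 0 < δ) (hδ1 : δ ≤ 1) :
    μ {ω | ∑ i ∈ Finset.Icc 1 (τ ω), X i ω < (1 - δ) * r}
      ≤ ENNReal.ofReal (Real.exp (-(δ ^ 2) * r / 2)) :=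
  martingale_chernoff_lower_general μ ℱ hℱ hℱmono X P hX01 hXmeas hPmeas hP r hr m τ hτfirst hτm δ
    hδ0
end
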